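/- Let u be a C² solution of u_{tt} − Δu + (μ₁/(1+t))u_t + (μ₂²/(1+t)²)u = |u|^p with ψ(t,x) = μ₁|x|²/(2(1+t)²). Then ∂_t[ (e^{2ψ}/2)(u_t² + |∇u|² + m²(t)u²) − e^{2ψ}|u|^p u/(p+1) ] ≤ div(e^{2ψ}u_t∇u) − 2ψ_t e^{2ψ}|u|^p u/(p+1), pointwise in (t,x). -/

import Mathlib

/-!
Differentiating the weighted energy in `t` and eliminating `u_tt` with the equation, the terms
`e^{2ψ} (∇u·∇u_t + u_t Δu)` and `e^{2ψ} u_t |u|^p` are exactly matched by the flux divergence and by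
the time derivative of `e^{2ψ}|u|^p u/(p+1)`. What remains is `e^{2ψ}` times
`ψ_t (u_t² + |∇u|² + m² u²) - μ₁/(1+t) u_t² + (m²)'/2 u² - 2 u_t ∇ψ·∇u`, which is nonpositive:
`ψ_t ≤ 0`, `m²` decreases, and completing the square in `u_t` leaves `(b|∇ψ|² + ψ_t)|∇u|² = 0`
with `b = (1+t)/μ₁` (Cauchy–Schwarz).
-/

open MeasureTheory Real

noncomputable def psi (μ₁ : ℝ) (n : ℕ) (t : ℝ) (x : EuclideanSpace ℝ (Fin n)) : ℝ :=
  μ₁ * ‖x‖ ^ 2 / (2 * (1 + t) ^ 2)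

noncomputable def lap {n : ℕ} (f : EuclideanSpace ℝ (Fin n) → ℝ)
    (x : EuclideanSpace ℝ (Fin n)) : ℝ :=
  ∑ i : Fin n, fderiv ℝ (fun y => fderiv ℝ f y (EuclideanSpace.single i 1)) x
    (EuclideanSpace.single i 1)

noncomputable def divg {n : ℕ} (V : EuclideanSpace ℝ (Fin n) → EuclideanSpace ℝ (Fin n))
    (x : EuclideanSpace ℝ (Fin n)) : ℝ :=
  ∑ i : Fin n, fderiv ℝ (fun y => V y i) x (EuclideanSpace.single i 1)

noncomputable def ut {n : ℕ} (u : ℝ → EuclideanSpace ℝ (Fin n) → ℝ) (t : ℝ)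
    (x : EuclideanSpace ℝ (Fin n)) : ℝ :=
  deriv (fun s => u s x) t

open scoped RealInnerProductSpace

theorem hasDerivAt_abs_rpow_mul_self {p : ℝ} (hp : 1 < p) (y : ℝ) :
    HasDerivAt (fun z : ℝ => |z| ^ p * z) ((p + 1) * |y| ^ p) y := by
  refine ((hasDerivAt_abs_rpow y hp).mul (hasDerivAt_id y)).congr_deriv ?_
  have hsq : |y| ^ (p - 2) * y ^ 2 = |y| ^ p := by
    rw [← sq_abs, ← Real.rpow_natCast, ← Real.rpow_add' (abs_nonneg y) (by norm_num; linarith)]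
    norm_num
  simp only [id, mul_one]
  linear_combination p * hsq

theorem hasDerivAt_div_one_add_sq (c : ℝ) {t : ℝ} (ht : 1 + t ≠ 0) :
    HasDerivAt (fun s => c / (1 + s) ^ 2) (-(2 * c) / (1 + t) ^ 3) t := by
  have h := (hasDerivAt_const t c).div (((hasDerivAt_id t).const_add 1).pow 2) (pow_ne_zero 2 ht)
  refine h.congr_deriv ?_
  field_simp
  simp only [id_eq, Pi.pow_apply, zero_mul, Nat.cast_ofNat, Nat.add_one_sub_one, pow_one, zero_sub,
    neg_mul, neg_inj]
  ring

section Weight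

variable {μ₁ : ℝ} {n : ℕ}

theorem hasDerivAt_psi_time {t : ℝ} (ht : 1 + t ≠ 0) (x : EuclideanSpace ℝ (Fin n)) :
    HasDerivAt (fun s => psi μ₁ n s x) (-(μ₁ * ‖x‖ ^ 2) / (1 + t) ^ 3) t := by
  have hψ : (fun s => psi μ₁ n s x) = fun s => μ₁ * ‖x‖ ^ 2 / 2 / (1 + s) ^ 2 := by
    funext s
    rw [psi, div_div]
  rw [hψ]
  convert hasDerivAt_div_one_add_sq (μ₁ * ‖x‖ ^ 2 / 2) ht using 2
  ring

theorem hasFDerivAt_psi_space (t : ℝ) (x : EuclideanSpace ℝ (Fin n)) :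
    HasFDerivAt (psi μ₁ n t) ((μ₁ / (1 + t) ^ 2) • innerSL ℝ x) x := by
  have hψ : psi μ₁ n t = fun y => μ₁ / (2 * (1 + t) ^ 2) * ‖y‖ ^ 2 := by
    funext y
    rw [psi, mul_div_right_comm, div_mul_eq_mul_div]
  rw [hψ]
  refine ((hasStrictFDerivAt_norm_sq x).hasFDerivAt.const_mul _).congr_fderiv ?_
  ext v
  simp only [div_eq_mul_inv, mul_inv_rev, smul_apply, coe_innerSL_apply, nsmul_eq_mul,
    Nat.cast_ofNat, smul_eq_mul]
  ring

end Weight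

section Slices

variable {n : ℕ} {u : ℝ → EuclideanSpace ℝ (Fin n) → ℝ}

noncomputable def spatialGrad (n : ℕ) :
    StrongDual ℝ (ℝ × EuclideanSpace ℝ (Fin n)) →L[ℝ] EuclideanSpace ℝ (Fin n) :=
  (InnerProductSpace.toDual ℝ _).symm.toContinuousLinearEquiv.toContinuousLinearMap ∘L
    (ContinuousLinearMap.compL ℝ _ _ ℝ).flip (ContinuousLinearMap.inr ℝ ℝ _)

theorem ut_eq_fderiv (hu : Differentiable ℝ (fun q : ℝ × EuclideanSpace ℝ (Fin n) => u q.1 q.2))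
    (s : ℝ) (y : EuclideanSpace ℝ (Fin n)) :
    ut u s y = fderiv ℝ (fun q : ℝ × _ => u q.1 q.2) (s, y) (1, 0) := by
  have h := (hu (s, y)).hasFDerivAt.comp_hasDerivAt s
    ((hasDerivAt_id s).prodMk (hasDerivAt_const s y))
  simp only [Function.comp_def, id] at h
  exact h.deriv

theorem gradient_eq_spatialGrad
    (hu : Differentiable ℝ (fun q : ℝ × EuclideanSpace ℝ (Fin n) => u q.1 q.2))
    (s : ℝ) (y : EuclideanSpace ℝ (Fin n)) :
    gradient (u s) y = spatialGrad n (fderiv ℝ (fun q : ℝ × _ => u q.1 q.2) (s, y)) := by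
  have h : HasFDerivAt (u s) _ y := (hu (s, y)).hasFDerivAt.comp y (hasFDerivAt_prodMk_right s y)
  rw [gradient, h.fderiv]
  rfl

theorem contDiff_ut (hu : ContDiff ℝ 2 (fun q : ℝ × EuclideanSpace ℝ (Fin n) => u q.1 q.2)) :
    ContDiff ℝ 1 (fun q : ℝ × EuclideanSpace ℝ (Fin n) => ut u q.1 q.2) := by
  have h : (fun q : ℝ × EuclideanSpace ℝ (Fin n) => ut u q.1 q.2)
      = fun q => fderiv ℝ (fun q : ℝ × _ => u q.1 q.2) q (1, 0) := by
    funext q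
    exact ut_eq_fderiv (hu.differentiable two_ne_zero) q.1 q.2
  rw [h]
  exact (hu.fderiv_right (m := 1) le_rfl).clm_apply contDiff_const

theorem differentiable_gradient_slice
    (hu : ContDiff ℝ 2 (fun q : ℝ × EuclideanSpace ℝ (Fin n) => u q.1 q.2)) (t : ℝ) :
    Differentiable ℝ (gradient (u t)) := by
  have h : gradient (u t) = fun y => spatialGrad n (fderiv ℝ (fun q : ℝ × _ => u q.1 q.2) (t, y)) :=
    funext (gradient_eq_spatialGrad (hu.differentiable two_ne_zero) t)
  rw [h]
  exact (spatialGrad n).differentiable.comp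
    (((hu.fderiv_right (m := 1) le_rfl).differentiable one_ne_zero).comp (by fun_prop))

-- `∂ₜ` and `∇` commute because the second derivative of `u` is symmetric.
theorem hasDerivAt_gradient_time
    (hu : ContDiff ℝ 2 (fun q : ℝ × EuclideanSpace ℝ (Fin n) => u q.1 q.2))
    (t : ℝ) (x : EuclideanSpace ℝ (Fin n)) :
    HasDerivAt (fun s => gradient (u s) x) (gradient (ut u t) x) t := by
  set F := fun q : ℝ × EuclideanSpace ℝ (Fin n) => u q.1 q.2
  have hF : Differentiable ℝ F := hu.differentiable two_ne_zero
  have hF' : Differentiable ℝ (fderiv ℝ F) :=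
    (hu.fderiv_right (m := 1) le_rfl).differentiable one_ne_zero
  have htime := ((spatialGrad n).hasFDerivAt.comp_hasDerivAt t
    ((hF' (t, x)).hasFDerivAt.comp_hasDerivAt t ((hasDerivAt_id t).prodMk (hasDerivAt_const t x))))
  have hspace : HasFDerivAt (ut u t)
      ((fderiv ℝ (fderiv ℝ F) (t, x)).flip (1, 0) ∘L ContinuousLinearMap.inr ℝ ℝ _) x := by
    have h := ((hF' (t, x)).hasFDerivAt.clm_apply (hasFDerivAt_const (1, 0) (t, x))).comp x
      (hasFDerivAt_prodMk_right t x)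
    refine h.congr_of_eventuallyEq (Filter.Eventually.of_forall fun y => ?_) |>.congr_fderiv ?_
    · exact ut_eq_fderiv hF t y
    · ext v
      simp
  have hsymm := (hu.contDiffAt (x := (t, x))).isSymmSndFDerivAt (by simp)
  refine (htime.congr_of_eventuallyEq (Filter.Eventually.of_forall fun s => ?_)).congr_deriv ?_
  · exact gradient_eq_spatialGrad hF s x
  · rw [gradient, hspace.fderiv]
    have hflip : fderiv ℝ (fderiv ℝ F) (t, x) (1, 0) = (fderiv ℝ (fderiv ℝ F) (t, x)).flip (1, 0) :=
      ContinuousLinearMap.ext (hsymm.eq (1, 0))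
    rw [hflip]
    rfl

end Slices

section Divergence

variable {n : ℕ}

theorem gradient_apply_eq_fderiv (f : EuclideanSpace ℝ (Fin n) → ℝ) (y : EuclideanSpace ℝ (Fin n))
    (i : Fin n) : gradient f y i = fderiv ℝ f y (EuclideanSpace.single i 1) := by
  rw [← inner_gradient_left, EuclideanSpace.inner_single_right, one_mul, conj_trivial]

theorem divg_gradient (f : EuclideanSpace ℝ (Fin n) → ℝ) (x : EuclideanSpace ℝ (Fin n)) :
    divg (gradient f) x = lap f x := by
  simp only [divg, lap, gradient_apply_eq_fderiv]

theorem divg_smul {f : EuclideanSpace ℝ (Fin n) → ℝ}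
    {V : EuclideanSpace ℝ (Fin n) → EuclideanSpace ℝ (Fin n)} {x : EuclideanSpace ℝ (Fin n)}
    (hf : DifferentiableAt ℝ f x) (hV : DifferentiableAt ℝ V x) :
    divg (fun y => f y • V y) x = fderiv ℝ f x (V x) + f x * divg V x := by
  have hVi (i : Fin n) : DifferentiableAt ℝ (fun y => V y i) x := by fun_prop
  have hV_sum : ∑ i, V x i • EuclideanSpace.single i (1 : ℝ) = V x := by
    simpa using (EuclideanSpace.basisFun (Fin n) ℝ).sum_repr (V x)
  conv_rhs => rw [← hV_sum]
  simp only [divg, PiLp.smul_apply, smul_eq_mul, fderiv_fun_mul hf (hVi _), map_sum, map_smul,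
    Finset.mul_sum, ← Finset.sum_add_distrib]
  refine Finset.sum_congr rfl fun i _ => ?_
  simp only [add_apply, smul_apply, smul_eq_mul]
  ring

end Divergence

-- Completing the square in `a = u_t` is the identity `|∇ψ|² + ((1+t)/μ₁) ψ_t = 0` of the weight.
theorem energy_defect_nonpos {E : Type*} [NormedAddCommGroup E] [InnerProductSpace ℝ E]
    {μ₁ μ₂sq τ : ℝ} (hμ₁ : 0 ≤ μ₁) (hμ₂ : 0 ≤ μ₂sq) (hτ : 0 < τ) (x g : E) (a c : ℝ) :
    -(μ₁ * ‖x‖ ^ 2) / τ ^ 3 * (a ^ 2 + ‖g‖ ^ 2 + μ₂sq / τ ^ 2 * c ^ 2) - μ₁ / τ * a ^ 2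
      - μ₂sq / τ ^ 3 * c ^ 2 - 2 * (μ₁ / τ ^ 2) * a * ⟪x, g⟫ ≤ 0 := by
  have hcs : ⟪x, g⟫ ^ 2 ≤ ‖x‖ ^ 2 * ‖g‖ ^ 2 := by
    rw [← mul_pow]
    exact sq_le_sq' (neg_le_of_abs_le (abs_real_inner_le_norm x g)) (real_inner_le_norm x g)
  have hsquare : -(μ₁ * ‖x‖ ^ 2) / τ ^ 3 * (a ^ 2 + ‖g‖ ^ 2 + μ₂sq / τ ^ 2 * c ^ 2)
      - μ₁ / τ * a ^ 2 - μ₂sq / τ ^ 3 * c ^ 2 - 2 * (μ₁ / τ ^ 2) * a * ⟪x, g⟫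
      = -(μ₁ / τ ^ 3 * (‖x‖ ^ 2 * a ^ 2 + (‖x‖ ^ 2 * ‖g‖ ^ 2 - ⟪x, g⟫ ^ 2) + (τ * a + ⟪x, g⟫) ^ 2
          + ‖x‖ ^ 2 * (μ₂sq / τ ^ 2 * c ^ 2)) + μ₂sq / τ ^ 3 * c ^ 2) := by
    field_simp
    ring
  rw [hsquare, neg_nonpos]
  have := sub_nonneg.2 hcs
  positivity

theorem divg_weighted_flux {n : ℕ} {u : ℝ → EuclideanSpace ℝ (Fin n) → ℝ}
    (hu : ContDiff ℝ 2 (fun q : ℝ × EuclideanSpace ℝ (Fin n) => u q.1 q.2))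
    (μ₁ t : ℝ) (x : EuclideanSpace ℝ (Fin n)) :
    divg (fun y => (exp (2 * psi μ₁ n t y) * ut u t y) • gradient (u t) y) x
      = exp (2 * psi μ₁ n t x) * (2 * (μ₁ / (1 + t) ^ 2) * ut u t x * ⟪x, gradient (u t) x⟫
          + ⟪gradient (u t) x, gradient (ut u t) x⟫ + ut u t x * lap (u t) x) := by
  have hw := ((hasFDerivAt_psi_space (μ₁ := μ₁) t x).const_mul 2).exp
  have ha : DifferentiableAt ℝ (ut u t) x :=
    ((contDiff_ut hu).differentiable one_ne_zero).comp
      (by fun_prop : Differentiable ℝ fun y => (t, y)) x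
  have hwa := hw.fun_mul ha.hasFDerivAt
  rw [divg_smul hwa.differentiableAt (differentiable_gradient_slice hu t x), hwa.fderiv,
    divg_gradient]
  simp only [add_apply, smul_apply, smul_eq_mul, coe_innerSL_apply, inner_gradient_right,
    ringHom_apply]
  ring

theorem energy_inequality_semilinear_general (n : ℕ) (μ₁ μ₂sq p : ℝ)
    (hμ₁ : 0 < μ₁) (hμ₂ : 0 ≤ μ₂sq) (hp : 1 < p)
    (u : ℝ → EuclideanSpace ℝ (Fin n) → ℝ)
    (hu : ContDiff ℝ 2 (fun q : ℝ × EuclideanSpace ℝ (Fin n) => u q.1 q.2))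
    (hsol : ∀ t ≥ (0:ℝ), ∀ x,
      deriv (fun s => ut u s x) t - lap (u t) x + (μ₁ / (1 + t)) * ut u t x
        + (μ₂sq / (1 + t) ^ 2) * u t x = |u t x| ^ p) :
    ∀ t ≥ (0:ℝ), ∀ x : EuclideanSpace ℝ (Fin n),
      deriv (fun s => Real.exp (2 * psi μ₁ n s x) / 2 *
            ((ut u s x) ^ 2 + ‖gradient (u s) x‖ ^ 2 + (μ₂sq / (1 + s) ^ 2) * (u s x) ^ 2)
          - Real.exp (2 * psi μ₁ n s x) * (|u s x| ^ p * u s x) / (p + 1)) t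
        ≤
      divg (fun y => (Real.exp (2 * psi μ₁ n t y) * ut u t y) • gradient (u t) y) x
        - 2 * deriv (fun s => psi μ₁ n s x) t * Real.exp (2 * psi μ₁ n t x) *
            (|u t x| ^ p * u t x) / (p + 1) := by
  intro t ht x
  have hτ : 0 < 1 + t := by linarith
  have hslice : Differentiable ℝ fun s : ℝ => (s, x) := by fun_prop
  have hc : HasDerivAt (fun s => u s x) (ut u t x) t :=
    ((hu.differentiable two_ne_zero).comp hslice t).hasDerivAt
  have ha : HasDerivAt (fun s => ut u s x) (deriv (fun s => ut u s x) t) t :=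
    (((contDiff_ut hu).differentiable one_ne_zero).comp hslice t).hasDerivAt
  have hψ := hasDerivAt_psi_time (μ₁ := μ₁) hτ.ne' x
  have hw := (hψ.const_mul 2).exp
  have hN := (hasDerivAt_abs_rpow_mul_self hp (u t x)).comp t hc
  simp only [Function.comp_def] at hN
  have hE := ((hw.div_const 2).fun_mul
    (((ha.fun_pow 2).fun_add (hasDerivAt_gradient_time hu t x).norm_sq).fun_add
      ((hasDerivAt_div_one_add_sq μ₂sq hτ.ne').fun_mul (hc.fun_pow 2)))).fun_sub
    ((hw.fun_mul hN).div_const (p + 1))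
  rw [hE.deriv, divg_weighted_flux hu, hψ.deriv]
  have hp1 : p + 1 ≠ 0 := by linarith
  -- LHS − RHS is `e^{2ψ}` times the defect plus `e^{2ψ} u_t` times the equation.
  linear_combination (norm := skip) exp (2 * psi μ₁ n t x) *
      energy_defect_nonpos hμ₁.le hμ₂ hτ x (gradient (u t) x) (ut u t x) (u t x)
    + exp (2 * psi μ₁ n t x) * ut u t x * hsol t ht x
  refine le_of_eq ?_
  field_simp
  ring

/-- pointwise differential inequality for the weighted energy density
of a solution of the semi-linear equation with power non-linearity `|u|^p`. -/
theorem energy_inequality_semilinear (n : ℕ) (hn : 1 ≤ n) (μ₁ μ₂sq p : ℝ)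
    (hμ₁ : 0 < μ₁) (hμ₂ : 0 ≤ μ₂sq) (hp : 1 < p)
    (u : ℝ → EuclideanSpace ℝ (Fin n) → ℝ)
    (hu : ContDiff ℝ 2 (fun q : ℝ × EuclideanSpace ℝ (Fin n) => u q.1 q.2))
    (hsol : ∀ t ≥ (0:ℝ), ∀ x,
      deriv (fun s => ut u s x) t - lap (u t) x + (μ₁ / (1 + t)) * ut u t x
        + (μ₂sq / (1 + t) ^ 2) * u t x = |u t x| ^ p) :
    ∀ t ≥ (0:ℝ), ∀ x : EuclideanSpace ℝ (Fin n),
      deriv (fun s => Real.exp (2 * psi μ₁ n s x) / 2 *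
            ((ut u s x) ^ 2 + ‖gradient (u s) x‖ ^ 2 + (μ₂sq / (1 + s) ^ 2) * (u s x) ^ 2)
          - Real.exp (2 * psi μ₁ n s x) * (|u s x| ^ p * u s x) / (p + 1)) t
        ≤
      divg (fun y => (Real.exp (2 * psi μ₁ n t y) * ut u t y) • gradient (u t) y) x
        - 2 * deriv (fun s => psi μ₁ n s x) t * Real.exp (2 * psi μ₁ n t x) *
            (|u t x| ^ p * u t x) / (p + 1) :=
  energy_inequality_semilinear_general n μ₁ μ₂sq p hμ₁ hμ₂ hp u hu hsol
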